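/- The characteristic identity Π_{k=0}^{r}(Ĉ − c_k·(1⊗1)) = 0 has minimal possible degree: for every j ∈ {0,1,...,r} one has Π_{k=0, k≠j}^{r} ( Ĉ − c_k·(1⊗1) ) ≠ 0 in Cl ⊗ Cl, where c_k := (2k(2r−k) − r(2r−1))/(16(r−1)); equivalently, every eigenvalue c_0, c_1, ..., c_r actually occurs in the spectrum of Ĉ. -/

import Mathlib

open scoped TensorProduct

noncomputable section

/-- The quadratic form `x₁² + ⋯ + x_{2r}²` on `ℂ^{2r}`. -/
def Qf (r : ℕ) : QuadraticForm ℂ (Fin (2*r) → ℂ) :=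
  QuadraticMap.weightedSumSquares ℂ (fun _ : Fin (2*r) => (1:ℂ))

/-- The Clifford algebra of `Qf r`. -/
abbrev Cl (r : ℕ) := CliffordAlgebra (Qf r)

/-- The generators `Γ_i`. -/
def Γgen (r : ℕ) (i : Fin (2*r)) : Cl r :=
  CliffordAlgebra.ι (Qf r) (Pi.single i 1)

/-- The antisymmetrised products `Γ_{[i₁…i_k]}`. -/
def Γbr (r k : ℕ) (i : Fin k → Fin (2*r)) : Cl r :=
  ((k.factorial : ℂ))⁻¹ •
    ∑ σ : Equiv.Perm (Fin k),
      ((Equiv.Perm.sign σ : ℤ) : ℂ) • (List.ofFn fun j => Γgen r (i (σ j))).prod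

/-- The invariants `I_k ∈ Cl ⊗ Cl`. -/
def Ik (r k : ℕ) : Cl r ⊗[ℂ] Cl r :=
  ∑ i : Fin k → Fin (2*r), (Γbr r k i) ⊗ₜ[ℂ] (Γbr r k i)

/-- The split Casimir element `Ĉ = −I₂/(16(2r−2))`. -/
def sC (r : ℕ) : Cl r ⊗[ℂ] Cl r := (-(16*(2*(r:ℂ)-2))⁻¹) • Ik r 2

/-- The top element `Γ_{2r+1} = (−i)^r Γ₁⋯Γ_{2r}`. -/
def Γtop (r : ℕ) : Cl r :=
  ((-Complex.I)^r) • (List.ofFn fun i : Fin (2*r) => Γgen r i).prod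

/-- The chirality projector `p_ε = (1 + ε Γ_{2r+1})/2`. -/
def pCh (r : ℕ) (ε : ℂ) : Cl r := (2:ℂ)⁻¹ • (1 + ε • Γtop r)

/-- The chirality projectors `p_{εε'} = p_ε ⊗ p_{ε'}`. -/
def ppCh (r : ℕ) (ε ε' : ℂ) : Cl r ⊗[ℂ] Cl r := (pCh r ε) ⊗ₜ[ℂ] (pCh r ε')

/-- The eigenvalues `c_k = (2k(2r−k) − r(2r−1))/(16(r−1))`. -/
def cEv (r k : ℕ) : ℂ :=
  (2*(k:ℂ)*(2*(r:ℂ)-(k:ℂ)) - (r:ℂ)*(2*(r:ℂ)-1)) / (16*((r:ℂ)-1))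

/-- The spectral projectors `P_k = Π_{j≠k} (Ĉ − c_j)/(c_k − c_j)`. -/
def Pk (r k : ℕ) : Cl r ⊗[ℂ] Cl r :=
  (((List.range (r+1)).filter (fun j => j ≠ k)).map
    (fun j => (cEv r k - cEv r j)⁻¹ • (sC r - cEv r j • 1))).prod

/-- `P_r^S = (p_{++} + p_{−−})·P_r`. -/
def PrS (r : ℕ) : Cl r ⊗[ℂ] Cl r := (ppCh r 1 1 + ppCh r (-1) (-1)) * Pk r r

/-- The ascending factorial `a_k(u) = (u/2)(u/2+1)⋯(u/2+k−1)`. -/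
def asc (u : ℂ) (k : ℕ) : ℂ := ∏ j ∈ Finset.range k, (u/2 + (j:ℂ))

/-!
Let `Cl ⊗ Cl` act on `Cl` by `(a ⊗ b) • x = a * x * reverse b`. Since `Γ_{[ab]}` is `Γ_a Γ_b` for
`a ≠ b` and `0` for `a = b`, the element `I₂` acts by `x ↦ ∑_{a,b} Γ_a Γ_b x Γ_b Γ_a - 2r x`.
A product `x` of `k` distinct generators satisfies `∑_a Γ_a x Γ_a = (-1)^k (2r - 2k) x`, because
`Γ_a` anticommutes with the `k - [a ∈ x]` factors different from it. Hence `x` is an eigenvector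
of `Ĉ` with eigenvalue `c_k`. Taking `x = Γ_1 ⋯ Γ_j`, which is a unit, every factor `Ĉ - c_k`
with `k ≠ j` acts on it by the scalar `c_j - c_k ≠ 0`, so the product does not vanish.
-/

namespace CliffordAlgebra

variable {R M : Type*} [CommRing R] [AddCommGroup M] [Module R M] (Q : QuadraticForm R M)

def sandwich : CliffordAlgebra Q ⊗[R] CliffordAlgebra Q →ₐ[R] Module.End R (CliffordAlgebra Q) :=
  Algebra.TensorProduct.lift (Algebra.lmul R _) ((Algebra.lsmul R R _).comp reverseOp)
    fun a _ => LinearMap.ext fun x => (mul_assoc a x _).symm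

theorem sandwich_tmul (a b x : CliffordAlgebra Q) :
    sandwich Q (a ⊗ₜ b) x = a * x * reverse b :=
  (mul_assoc a x _).symm

end CliffordAlgebra

theorem Module.End.list_prod_map_sub_smul_apply {K V ι : Type*} [CommRing K] [AddCommGroup V]
    [Module K V] {f : Module.End K V} {μ : K} {x : V} (hx : f x = μ • x) (c : ι → K)
    (L : List ι) : (L.map fun k => f - c k • 1).prod x = (L.map fun k => μ - c k).prod • x := by
  induction L with
  | nil => simp
  | cons k L ih =>
    simp only [List.map_cons, List.prod_cons, Module.End.mul_apply, LinearMap.sub_apply,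
      LinearMap.smul_apply, Module.End.one_apply, hx, ← sub_smul, map_smul, ih]
    rw [mul_comm, mul_smul]

theorem sum_neg_one_pow_count {ι R : Type*} [Fintype ι] [DecidableEq ι] [CommRing R] {l : List ι}
    (hl : l.Nodup) : ∑ i, (-1 : R) ^ l.count i = Fintype.card ι - 2 * l.length := by
  have hcard : (Finset.univ.filter (· ∈ l)).card = l.length := by
    rw [← List.toFinset_card_of_nodup hl]
    congr 1
    ext
    simp
  have hsign : ∀ i, (-1 : R) ^ l.count i = 1 - 2 * if i ∈ l then 1 else 0 := by
    intro i
    rw [hl.count]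
    split_ifs <;> norm_num
  simp only [hsign, Finset.sum_sub_distrib, ← Finset.mul_sum, Finset.sum_boole, hcard]
  simp

open CliffordAlgebra

section Gamma

variable (r : ℕ)

theorem Qf_single (a : Fin (2*r)) : Qf r (Pi.single a 1) = 1 := by
  simp [Qf, QuadraticMap.weightedSumSquares_apply, Pi.single_apply]

theorem Qf_isOrtho_single {a b : Fin (2*r)} (h : a ≠ b) :
    (Qf r).IsOrtho (Pi.single a 1) (Pi.single b 1) := by
  rw [QuadraticMap.isOrtho_def, Qf_single, Qf_single]
  simp [Qf, QuadraticMap.weightedSumSquares_apply, Pi.single_apply, mul_add, Finset.sum_add_distrib,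
    h, Ne.symm h]

theorem Γgen_mul_self (a : Fin (2*r)) : Γgen r a * Γgen r a = 1 := by
  rw [Γgen, ι_sq_scalar, Qf_single, map_one]

theorem Γgen_mul_Γgen_swap (a b : Fin (2*r)) :
    Γgen r a * Γgen r b = (if a = b then 1 else -1 : ℂ) • (Γgen r b * Γgen r a) := by
  split_ifs with h
  · rw [h, one_smul]
  · rw [neg_one_smul, eq_neg_iff_add_eq_zero]
    exact ι_mul_ι_add_swap_of_isOrtho (Qf_isOrtho_single r h)

def Γword (l : List (Fin (2*r))) : Cl r := (l.map (Γgen r)).prod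

theorem Γgen_mul_Γword (a : Fin (2*r)) (l : List (Fin (2*r))) :
    Γgen r a * Γword r l = ((-1 : ℂ) ^ (l.length + l.count a)) • (Γword r l * Γgen r a) := by
  induction l with
  | nil => simp [Γword]
  | cons b l ih =>
    simp only [Γword, List.map_cons, List.prod_cons] at ih ⊢
    rw [← mul_assoc, Γgen_mul_Γgen_swap, smul_mul_assoc, mul_assoc, ih, mul_smul_comm, smul_smul,
      ← mul_assoc, List.length_cons, List.count_cons]
    congr 1
    by_cases h : a = b
    · simp only [h, ↓reduceIte, one_mul, BEq.rfl]
      ring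
    · simp only [h, ↓reduceIte, neg_mul, one_mul, beq_iff_eq, Ne.symm h, add_zero]
      ring

theorem Γgen_mul_Γword_mul_Γgen (a : Fin (2*r)) (l : List (Fin (2*r))) :
    Γgen r a * Γword r l * Γgen r a = ((-1 : ℂ) ^ (l.length + l.count a)) • Γword r l := by
  rw [Γgen_mul_Γword, smul_mul_assoc, mul_assoc, Γgen_mul_self, mul_one]

theorem sum_Γgen_mul_Γword_mul_Γgen {l : List (Fin (2*r))} (hl : l.Nodup) :
    ∑ a, Γgen r a * Γword r l * Γgen r a
      = ((-1 : ℂ) ^ l.length * (2 * r - 2 * l.length)) • Γword r l := by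
  simp only [Γgen_mul_Γword_mul_Γgen, ← Finset.sum_smul, pow_add, ← Finset.mul_sum,
    sum_neg_one_pow_count hl, Fintype.card_fin, Nat.cast_mul, Nat.cast_ofNat]

theorem Γword_ne_zero (l : List (Fin (2*r))) : Γword r l ≠ 0 := by
  refine IsUnit.ne_zero (List.prod_isUnit fun a ha => ?_)
  obtain ⟨i, -, rfl⟩ := List.mem_map.mp ha
  exact ⟨⟨Γgen r i, Γgen r i, Γgen_mul_self r i, Γgen_mul_self r i⟩, rfl⟩

theorem Γbr_two (i : Fin 2 → Fin (2*r)) :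
    Γbr r 2 i = if i 0 = i 1 then 0 else Γgen r (i 0) * Γgen r (i 1) := by
  have hperm : (Finset.univ : Finset (Equiv.Perm (Fin 2))) = {1, Equiv.swap 0 1} := by decide
  have hΓbr : Γbr r 2 i
      = (2 : ℂ)⁻¹ • (Γgen r (i 0) * Γgen r (i 1) - Γgen r (i 1) * Γgen r (i 0)) := by
    rw [Γbr, hperm, Finset.sum_pair (by decide)]
    simp [List.ofFn_succ, sub_eq_add_neg]
  rw [hΓbr, Γgen_mul_Γgen_swap r (i 1) (i 0)]
  by_cases h : i 0 = i 1
  · simp [h]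
  · rw [if_neg (Ne.symm h), if_neg h]
    module

theorem sandwich_Ik_two (x : Cl r) :
    sandwich (Qf r) (Ik r 2) x
      = ∑ a, ∑ b, Γgen r a * (Γgen r b * x * Γgen r b) * Γgen r a - (2 * r : ℂ) • x := by
  set g : Fin (2*r) → Fin (2*r) → Cl r := fun a b => Γgen r a * (Γgen r b * x * Γgen r b) * Γgen r a
  have hterm : ∀ i : Fin 2 → Fin (2*r), sandwich (Qf r) (Γbr r 2 i ⊗ₜ Γbr r 2 i) x
      = g (i 0) (i 1) - if i 0 = i 1 then x else 0 := by
    intro i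
    rw [sandwich_tmul, Γbr_two]
    split_ifs with h
    · simp only [g, h, zero_mul, map_zero, mul_zero, ← mul_assoc, Γgen_mul_self, one_mul]
      rw [mul_assoc, Γgen_mul_self, mul_one, sub_self]
    · simp [g, Γgen, reverse.map_mul, reverse_ι, mul_assoc]
  calc sandwich (Qf r) (Ik r 2) x
      = ∑ i : Fin 2 → Fin (2*r), (g (i 0) (i 1) - if i 0 = i 1 then x else 0) := by
        rw [Ik, map_sum, LinearMap.sum_apply]
        exact Finset.sum_congr rfl fun i _ => hterm i
    _ = ∑ p : Fin (2*r) × Fin (2*r), (g p.1 p.2 - if p.1 = p.2 then x else 0) :=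
        Fintype.sum_equiv (finTwoArrowEquiv _) _ _ fun _ => rfl
    _ = _ := by
        simp only [Fintype.sum_prod_type, Finset.sum_sub_distrib, Finset.sum_ite_eq,
          Finset.mem_univ, if_true, Finset.sum_const, Finset.card_univ, Fintype.card_fin]
        rw [← Nat.cast_smul_eq_nsmul ℂ]
        push_cast
        rfl

theorem sandwich_sC_Γword {l : List (Fin (2*r))} (hl : l.Nodup) :
    sandwich (Qf r) (sC r) (Γword r l) = cEv r l.length • Γword r l := by
  set μ : ℂ := (-1) ^ l.length * (2 * r - 2 * l.length)
  have hμ : μ * μ = (2 * r - 2 * l.length) ^ 2 := by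
    rw [mul_mul_mul_comm, ← mul_pow, neg_one_mul, neg_neg, one_pow, one_mul, sq]
  have hsum : ∑ a, ∑ b, Γgen r a * (Γgen r b * Γword r l * Γgen r b) * Γgen r a
      = (μ * μ) • Γword r l := by
    simp only [← Finset.sum_mul, ← Finset.mul_sum, sum_Γgen_mul_Γword_mul_Γgen r hl,
      mul_smul_comm, smul_mul_assoc, ← Finset.smul_sum, smul_smul]
    rfl
  rw [sC, map_smul, LinearMap.smul_apply, sandwich_Ik_two, hsum, ← sub_smul, smul_smul, hμ, cEv,
    show (16 * (2 * (r : ℂ) - 2)) = 2 * (16 * (r - 1)) by ring, mul_inv, div_eq_mul_inv]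
  congr 1
  ring

end Gamma

theorem cEv_sub_cEv (r j k : ℕ) :
    cEv r j - cEv r k = 2 * ((j : ℂ) - k) * (2 * r - j - k) / (16 * (r - 1)) := by
  rw [cEv, cEv, div_sub_div_same]
  congr 1
  ring

theorem cEv_injOn {r : ℕ} (hr : r ≠ 1) : Set.InjOn (cEv r) (Set.Iic r) := by
  intro j hj k hk h
  have hden : (16 * ((r : ℂ) - 1)) ≠ 0 :=
    mul_ne_zero (by norm_num) (sub_ne_zero.mpr (by exact_mod_cast hr))
  have hnum := sub_eq_zero.mpr h
  rw [cEv_sub_cEv, div_eq_zero_iff, or_iff_left hden, mul_eq_zero, mul_eq_zero,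
    or_iff_right two_ne_zero, sub_eq_zero, sub_sub, sub_eq_zero] at hnum
  rcases hnum with hjk | hjk
  · exact_mod_cast hjk
  · have : 2 * r = j + k := by exact_mod_cast hjk
    simp only [Set.mem_Iic] at hj hk
    omega

/-- minimality of the characteristic identity: dropping any factor
gives a nonzero product, i.e. every eigenvalue `c_j`, `0 ≤ j ≤ r`, occurs. -/
theorem sC_char_identity_minimal (r : ℕ) (hr : 2 ≤ r) (j : ℕ) (hj : j ≤ r) :
    ((((List.range (r+1)).filter (fun k => k ≠ j)).map
        (fun k => sC r - cEv r k • 1)).prod : Cl r ⊗[ℂ] Cl r) ≠ 0 := by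
  intro h0
  set l := (List.finRange (2*r)).take j
  have hl : l.Nodup := (List.take_sublist _ _).nodup (List.nodup_finRange _)
  have hlen : l.length = j := by
    simp only [l, List.length_take, List.length_finRange]
    omega
  have heig : sandwich (Qf r) (sC r) (Γword r l) = cEv r j • Γword r l :=
    hlen ▸ sandwich_sC_Γword r hl
  have happ := congrArg (fun T => sandwich (Qf r) T (Γword r l)) h0
  simp only [map_list_prod, List.map_map, Function.comp_def, map_sub, map_smul, map_one,
    map_zero, LinearMap.zero_apply, Module.End.list_prod_map_sub_smul_apply heig] at happ
  rcases smul_eq_zero.mp happ with hprod | hw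
  · obtain ⟨k, hk, hjk⟩ := List.mem_map.mp (List.prod_eq_zero_iff.mp hprod)
    obtain ⟨hkr, hkj⟩ := by simpa using hk
    exact hkj (cEv_injOn (by omega) (Set.mem_Iic.mpr (by omega)) (Set.mem_Iic.mpr hj)
      (sub_eq_zero.mp hjk).symm)
  · exact Γword_ne_zero r l hw

end
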